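/- There is a constant κ₁ > 10 such that for every κ ≥ κ₁ there exists k₀ = k₀(κ) > 0 with the following property. In the setting of the Whitney decomposition 𝒲 and the cluster assignment Q ↦ C_Q with ε ≤ k₀/N: if Q, Q' ∈ 𝒲 with Q ↔ Q' and C_Q ≠ C_{Q'}, then either C_Q = π(C_{Q'}) or C_{Q'} = π(C_Q). -/

import Mathlib

open MeasureTheory Set Metric
open scoped Classical

noncomputable section

abbrev Pt : Type := EuclideanSpace ℝ (Fin 2)

/-- The point `(a, b)` of the Euclidean plane. -/
def pt (a b : ℝ) : Pt := WithLp.toLp 2 ![a, b]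

/-- `V` is an `N`-ary tree: a finite prefix-closed set of strings over the alphabet
`{0, …, N−1}` containing the empty string (the root), in which every non-leaf node
has at least `2` (and, automatically, at most `N`) children. -/
def IsNaryTree (N : ℕ) (V : Finset (List ℕ)) : Prop :=
  [] ∈ V ∧
  (∀ v ∈ V, ∀ u : List ℕ, u <+: v → u ∈ V) ∧
  (∀ v ∈ V, ∀ i ∈ v, i < N) ∧
  (∀ v ∈ V, (∃ a : ℕ, v ++ [a] ∈ V) →
    2 ≤ ((Finset.range N).filter (fun a => v ++ [a] ∈ V)).card)

/-- `v` is a leaf of `V`. -/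
def IsLeaf (V : Finset (List ℕ)) (v : List ℕ) : Prop :=
  v ∈ V ∧ ∀ a : ℕ, v ++ [a] ∉ V

/-- The tree has depth at least one, i.e. the root is not a leaf. -/
def DepthAtLeastOne (V : Finset (List ℕ)) : Prop := ∃ a : ℕ, [a] ∈ V

/-- Radially decaying weights with parameter `ε` (with the convention `W ∅ = 1`). -/
def RadiallyDecaying (V : Finset (List ℕ)) (W : List ℕ → ℝ) (ε : ℝ) : Prop :=
  W [] = 1 ∧ (∀ v ∈ V, 0 < W v) ∧ ∀ v ∈ V, v ≠ [] → W v ≤ ε * W v.dropLast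

/-- The map `Ψ(v) = ∑_{i=1}^{d(v)} W(π_{i−1}(v))·v_i/(N−1)`. -/
def Psi (N : ℕ) (W : List ℕ → ℝ) (v : List ℕ) : ℝ :=
  ∑ i ∈ Finset.range v.length, W (v.take i) * (v.getD i 0 : ℝ) / ((N : ℝ) - 1)

/-- `Δ = min_{v ∈ ∂V} W_v`. -/
def Delta (V : Finset (List ℕ)) (W : List ℕ → ℝ) : ℝ :=
  sInf {w : ℝ | ∃ v, IsLeaf V v ∧ w = W v}

def E1set (Δ : ℝ) : Set Pt :=
  {x | (∃ n : ℤ, x 0 = (n : ℝ) * Δ) ∧ x 0 ∈ Ico (0 : ℝ) 2 ∧ x 1 = 0}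

def E2set (N : ℕ) (V : Finset (List ℕ)) (W : List ℕ → ℝ) : Set Pt :=
  {x | ∃ v, IsLeaf V v ∧ x = pt (Psi N W v) (W v)}

def Eset (N : ℕ) (V : Finset (List ℕ)) (W : List ℕ → ℝ) : Set Pt :=
  E1set (Delta V W) ∪ E2set N V W

/-- Bundle of standing hypotheses: `N ≥ 2`, `V` an `N`-ary tree, `0 < ε ≤ k₀/N`,
and radially decaying weights with parameter `ε`. -/
def TreeHyp (k₀ : ℝ) (N : ℕ) (V : Finset (List ℕ)) (W : List ℕ → ℝ) (ε : ℝ) : Prop :=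
  2 ≤ N ∧ IsNaryTree N V ∧ 0 < ε ∧ ε ≤ k₀ / N ∧ RadiallyDecaying V W ε

/-- Distance between two subsets of the plane. -/
def setDist (s t : Set Pt) : ℝ := sInf {d : ℝ | ∃ x ∈ s, ∃ y ∈ t, d = dist x y}

/-- A dyadic square arising from `Q⁰ = [−3,5)²` by `k` repeated bisections. -/
structure DSquare where
  k : ℕ
  i : ℕ
  j : ℕ
  hi : i < 2 ^ k
  hj : j < 2 ^ k

namespace DSquare

def side (Q : DSquare) : ℝ := 8 / 2 ^ Q.k

def x0 (Q : DSquare) : ℝ := -3 + Q.i * Q.side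

def y0 (Q : DSquare) : ℝ := -3 + Q.j * Q.side

/-- The (half-open) square itself, as a subset of the plane. -/
def set (Q : DSquare) : Set Pt :=
  {x | x 0 ∈ Ico Q.x0 (Q.x0 + Q.side) ∧ x 1 ∈ Ico Q.y0 (Q.y0 + Q.side)}

/-- The concentric dilate `λQ`. -/
def dil (Q : DSquare) (lam : ℝ) : Set Pt :=
  {x | |x 0 - (Q.x0 + Q.side / 2)| ≤ lam * Q.side / 2 ∧
       |x 1 - (Q.y0 + Q.side / 2)| ≤ lam * Q.side / 2}

/-- The dyadic ancestor of `Q` at generation `k' ≤ Q.k`. -/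
def anc (Q : DSquare) (k' : ℕ) (h : k' ≤ Q.k) : DSquare :=
  ⟨k', Q.i / 2 ^ (Q.k - k'), Q.j / 2 ^ (Q.k - k'), by
      have h2 : 0 < 2 ^ (Q.k - k') := pow_pos (by norm_num) _
      rw [Nat.div_lt_iff_lt_mul h2, ← pow_add, Nat.add_sub_cancel' h]
      exact Q.hi, by
      have h2 : 0 < 2 ^ (Q.k - k') := pow_pos (by norm_num) _
      rw [Nat.div_lt_iff_lt_mul h2, ← pow_add, Nat.add_sub_cancel' h]
      exact Q.hj⟩

end DSquare

def Q0set : Set Pt := {x | x 0 ∈ Ico (-3 : ℝ) 5 ∧ x 1 ∈ Ico (-3 : ℝ) 5}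

/-- `Q` belongs to the Whitney decomposition `𝒲` of `Q⁰` relative to `E`:
`3Q ∩ E` has at most one point, while `3Q'' ∩ E` has at least two points for every
proper dyadic ancestor `Q''` of `Q`. -/
def InWhitney (E : Set Pt) (Q : DSquare) : Prop :=
  (Q.dil 3 ∩ E).Subsingleton ∧
  ∀ k' : ℕ, ∀ h : k' < Q.k, ¬ ((Q.anc k' h.le).dil 3 ∩ E).Subsingleton

/-- `Q ↔ Q'`, i.e. `1.1Q ∩ 1.1Q' ≠ ∅`. -/
def Touch (Q Q' : DSquare) : Prop := (Q.dil 1.1 ∩ Q'.dil 1.1).Nonempty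

/-- `‖F‖_{L^{2,p}(Ω)}^p = ∫_Ω |∇²F|^p`. -/
def sobEnergy (p : ℝ) (Ω : Set Pt) (F : Pt → ℝ) : ℝ :=
  ∫ x in Ω, ‖iteratedFDeriv ℝ 2 F x‖ ^ p

/-- The seminorm `‖F‖_{L^{2,p}(Ω)}`. -/
def sobNorm (p : ℝ) (Ω : Set Pt) (F : Pt → ℝ) : ℝ := sobEnergy p Ω F ^ (1 / p)

/-- Membership in the homogeneous Sobolev space `L^{2,p}(ℝ²)` (we work with `C²`
representatives with finite seminorm). -/
def MemSob (p : ℝ) (F : Pt → ℝ) : Prop :=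
  ContDiff ℝ 2 F ∧ Integrable fun x => ‖iteratedFDeriv ℝ 2 F x‖ ^ p

/-- The trace seminorm `‖f‖_{L^{2,p}(E)}` of `f : E → ℝ`. -/
def traceSobNorm (p : ℝ) (E : Set Pt) (f : E → ℝ) : ℝ :=
  sInf {c : ℝ | ∃ F : Pt → ℝ, MemSob p F ∧ (∀ y : E, F y.1 = f y) ∧ c = sobNorm p univ F}

/-- `T` is a linear extension operator `L^{2,p}(E) → L^{2,p}(ℝ²)` with norm bound `M`. -/
def IsExtOpPlane (p : ℝ) (E : Set Pt) (M : ℝ) (T : (E → ℝ) →ₗ[ℝ] (Pt → ℝ)) : Prop :=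
  ∀ f : E → ℝ, (∃ F : Pt → ℝ, MemSob p F ∧ ∀ y : E, F y.1 = f y) →
    MemSob p (T f) ∧ (∀ y : E, T f y.1 = f y) ∧
      sobNorm p univ (T f) ≤ M * traceSobNorm p E f

/-- `‖Φ‖_{L^{1,p}(V)}^p = ∑_{v ∈ V₀} |Φ(v) − Φ(π(v))|^p W_v^{2−p}`. -/
def treeEnergy (p : ℝ) (V : Finset (List ℕ)) (W : List ℕ → ℝ) (Φ : List ℕ → ℝ) : ℝ :=
  ∑ v ∈ V.erase [], |Φ v - Φ v.dropLast| ^ p * W v ^ (2 - p)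

def treeNorm (p : ℝ) (V : Finset (List ℕ)) (W : List ℕ → ℝ) (Φ : List ℕ → ℝ) : ℝ :=
  treeEnergy p V W Φ ^ (1 / p)

/-- The type of leaves of `V`. -/
def Leaves (V : Finset (List ℕ)) : Type := {v : List ℕ // IsLeaf V v}

/-- The trace seminorm `‖φ‖_{L^{1,p}(∂V)}`. -/
def treeTraceNorm (p : ℝ) (V : Finset (List ℕ)) (W : List ℕ → ℝ) (φ : Leaves V → ℝ) : ℝ :=
  sInf {c : ℝ | ∃ Φ : List ℕ → ℝ, (∀ v : Leaves V, Φ v.1 = φ v) ∧ c = treeNorm p V W Φ}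

/-- `H` is a linear extension operator `L^{1,p}(∂V) → L^{1,p}(V)` with norm bound `M`. -/
def IsExtOpTree (p : ℝ) (V : Finset (List ℕ)) (W : List ℕ → ℝ) (M : ℝ)
    (H : (Leaves V → ℝ) →ₗ[ℝ] (List ℕ → ℝ)) : Prop :=
  ∀ φ : Leaves V → ℝ,
    (∀ v : Leaves V, H φ v.1 = φ v) ∧ treeNorm p V W (H φ) ≤ M * treeTraceNorm p V W φ

/-- Longest common prefix of two strings (the lowest common ancestor). -/
def lcp : List ℕ → List ℕ → List ℕ
  | a :: as, b :: bs => if a = b then a :: lcp as bs else []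
  | _, _ => []

/-- The cluster `C_v ⊆ E₂` associated to a vertex `v ∈ V`. -/
def Cluster (N : ℕ) (V : Finset (List ℕ)) (W : List ℕ → ℝ) (v : List ℕ) : Set Pt :=
  {x | ∃ u, IsLeaf V u ∧ v <+: u ∧ x = pt (Psi N W u) (W u)}

/-- The average `(∂₂G)_S` of the vertical derivative of `G` over `S`. -/
def d2avg (S : Set Pt) (G : Pt → ℝ) : ℝ :=
  ⨍ x in S, fderiv ℝ G x (EuclideanSpace.single 1 1)

end

/-!
Touching Whitney squares have comparable sides, so every square touching `Q` lies in the ball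
`39 B` for any ball `B` containing `Q`. If `v = C_Q` has parent `p`, the ball `39 B(y_v, R W_v)`
fits inside `B(y_p, R W_p)` because `W_v ≤ ε W_p`; by maximality of depth, `C_{Q'}` is then at
most one level above `C_Q`, and symmetrically.

The clusters are also nested. Otherwise they branch at some vertex `w` into different children
`w a` and `w b`; the first coordinate `Ψ` separates the subtrees below `w a` and `w b` by about
`W_w / N`, whereas `Q ↔ Q'` forces their base points to be `O(κ ε W_w)` apart. Nested clusters
whose depths differ by at most one are parent and child.
-/

namespace List

variable {α : Type*}

theorem IsPrefix.eq_dropLast_of_length_le_succ {v u : List α} (h : v <+: u) (hne : v ≠ u)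
    (hl : u.length ≤ v.length + 1) : v = u.dropLast := by
  have hlt : v.length ≠ u.length := fun e => hne (h.eq_of_length e)
  have := h.length_le
  rw [dropLast_eq_take, prefix_iff_eq_take.1 h]
  congr 1
  omega

theorem exists_fork_of_not_isPrefix :
    ∀ {v v' : List α}, ¬ v <+: v' → ¬ v' <+: v →
      ∃ w a b, a ≠ b ∧ w ++ [a] <+: v ∧ w ++ [b] <+: v'
  | [], _, h, _ => absurd nil_prefix h
  | _ :: _, [], _, h => absurd nil_prefix h
  | x :: v, x' :: v', h, h' => by
    by_cases hx : x = x'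
    · subst hx
      obtain ⟨w, a, b, hab, ha, hb⟩ :=
        exists_fork_of_not_isPrefix (mt (prefix_cons_inj x).2 h) (mt (prefix_cons_inj x).2 h')
      exact ⟨x :: w, a, b, hab, (prefix_cons_inj x).2 ha, (prefix_cons_inj x).2 hb⟩
    · exact ⟨[], x, x', hx, ⟨v, rfl⟩, ⟨v', rfl⟩⟩

end List

section TreeWeights

variable {N : ℕ} {V : Finset (List ℕ)} {W : List ℕ → ℝ} {ε : ℝ}

theorem RadiallyDecaying.le_of_isPrefix (hW : RadiallyDecaying V W ε) (hV : IsNaryTree N V)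
    (hε : ε ≤ 1) {u v : List ℕ} (hu : u ∈ V) (h : v <+: u) : W u ≤ W v := by
  induction u using List.reverseRecOn with
  | nil => rw [List.prefix_nil.1 h]
  | append_singleton us a ih =>
    rcases List.prefix_concat_iff.1 h with rfl | h
    · rfl
    have hus : us ∈ V := hV.2.1 _ hu _ (List.prefix_append _ _)
    have hdec : W (us ++ [a]) ≤ ε * W us := by simpa using hW.2.2 _ hu (by simp)
    nlinarith [hW.2.1 us hus, ih hus h]

theorem RadiallyDecaying.le_mul_of_isPrefix (hW : RadiallyDecaying V W ε) (hV : IsNaryTree N V)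
    (hε : ε ≤ 1) {u v : List ℕ} (hu : u ∈ V) (h : v <+: u) (hne : v ≠ u) :
    W u ≤ ε * W v := by
  cases u using List.reverseRecOn with
  | nil => exact absurd (List.prefix_nil.1 h) hne
  | append_singleton us a =>
    have hvus : v <+: us := (List.prefix_concat_iff.1 h).resolve_left hne
    have hus : us ∈ V := hV.2.1 _ hu _ (List.prefix_append _ _)
    have hdec : W (us ++ [a]) ≤ ε * W us := by simpa using hW.2.2 _ hu (by simp)
    have hε₀ : 0 < ε := pos_of_mul_pos_left ((hW.2.1 _ hu).trans_le hdec) (hW.2.1 us hus).le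
    exact hdec.trans (mul_le_mul_of_nonneg_left (hW.le_of_isPrefix hV hε hus hvus) hε₀.le)

theorem Psi_append_singleton (w : List ℕ) (a : ℕ) :
    Psi N W (w ++ [a]) = Psi N W w + W w * a / ((N : ℝ) - 1) := by
  unfold Psi
  rw [List.length_append, List.length_singleton, Finset.sum_range_succ, List.take_left,
    List.getD_append_right _ _ _ _ le_rfl, Nat.sub_self, List.getD_cons_zero]
  congr 1
  refine Finset.sum_congr rfl fun i hi => ?_
  rw [Finset.mem_range] at hi
  rw [List.take_append_of_le_length hi.le, List.getD_append _ _ _ _ hi]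

theorem cast_div_sub_one_mem_Icc {a : ℕ} (ha : a < N) :
    (a : ℝ) / ((N : ℝ) - 1) ∈ Icc 0 1 := by
  have hN : (a : ℝ) ≤ (N : ℝ) - 1 := by
    rw [le_sub_iff_add_le]
    exact_mod_cast ha
  exact ⟨div_nonneg a.cast_nonneg (a.cast_nonneg.trans hN),
    div_le_one_of_le₀ hN (a.cast_nonneg.trans hN)⟩

theorem Psi_mem_Icc_of_isPrefix (hW : RadiallyDecaying V W ε) (hV : IsNaryTree N V)
    (hε : ε ≤ 1 / 2) {u v : List ℕ} (hu : u ∈ V) (h : v <+: u) :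
    Psi N W u ∈ Icc (Psi N W v) (Psi N W v + 2 * (W v - W u)) := by
  induction u using List.reverseRecOn with
  | nil => rw [List.prefix_nil.1 h]; simp
  | append_singleton us a ih =>
    rcases List.prefix_concat_iff.1 h with rfl | h
    · simp
    have hus : us ∈ V := hV.2.1 _ hu _ (List.prefix_append _ _)
    have hdec : W (us ++ [a]) ≤ ε * W us := by simpa using hW.2.2 _ hu (by simp)
    have hletter := cast_div_sub_one_mem_Icc (hV.2.2.1 _ hu a (by simp))
    have hWus := hW.2.1 us hus
    have hstep : 0 ≤ W us * a / ((N : ℝ) - 1) ∧ W us * a / ((N : ℝ) - 1) ≤ W us := by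
      rw [mul_div_assoc]
      exact ⟨mul_nonneg hWus.le hletter.1, mul_le_of_le_one_right hWus.le hletter.2⟩
    obtain ⟨ih₁, ih₂⟩ := ih hus h
    rw [Psi_append_singleton]
    constructor <;> nlinarith

theorem le_mul_abs_Psi_sub_add_of_fork (hW : RadiallyDecaying V W ε) (hV : IsNaryTree N V)
    (hε : ε ≤ 1 / 2) {w ua ub : List ℕ} {a b : ℕ} (hab : a ≠ b) (hua : ua ∈ V) (hub : ub ∈ V)
    (ha : w ++ [a] <+: ua) (hb : w ++ [b] <+: ub) :
    W w ≤ ((N : ℝ) - 1) *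
      (|Psi N W ua - Psi N W ub| + 2 * W (w ++ [a]) + 2 * W (w ++ [b])) := by
  wlog hlt : a < b generalizing a b ua ub
  · have := this hab.symm hub hua hb ha (lt_of_le_of_ne (not_lt.1 hlt) hab.symm)
    rwa [abs_sub_comm, add_right_comm] at this
  have hbN : b < N := hV.2.2.1 _ hub b (hb.subset (by simp))
  have hN : (0 : ℝ) < (N : ℝ) - 1 := by
    rw [sub_pos]
    exact_mod_cast (Nat.one_le_iff_ne_zero.2 (by omega)).trans_lt hbN
  have hba : (1 : ℝ) ≤ b - a := by
    rw [le_sub_iff_add_le']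
    exact_mod_cast hlt
  have hWw : 0 ≤ W w := (hW.2.1 w (hV.2.1 _ hua _ ((List.prefix_append _ _).trans ha))).le
  have hWua : 0 ≤ W ua := (hW.2.1 _ hua).le
  have hWb : 0 ≤ W (w ++ [b]) := (hW.2.1 _ (hV.2.1 _ hub _ hb)).le
  have hPa := (Psi_mem_Icc_of_isPrefix hW hV hε hua ha).2
  have hPb := (Psi_mem_Icc_of_isPrefix hW hV hε hub hb).1
  rw [Psi_append_singleton] at hPa hPb
  have hgap : W w / ((N : ℝ) - 1) ≤ W w * b / ((N : ℝ) - 1) - W w * a / ((N : ℝ) - 1) := by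
    rw [← sub_div, ← mul_sub]
    gcongr
    exact le_mul_of_one_le_right hWw hba
  rw [← div_le_iff₀' hN]
  linarith [neg_abs_le (Psi N W ua - Psi N W ub)]

end TreeWeights

@[simp] theorem pt_apply_zero (a b : ℝ) : pt a b 0 = a := rfl

@[simp] theorem pt_apply_one (a b : ℝ) : pt a b 1 = b := rfl

theorem abs_apply_sub_le_dist (x y : Pt) (i : Fin 2) : |x i - y i| ≤ dist x y := by
  simpa only [Real.dist_eq] using PiLp.dist_apply_le x y i

theorem dist_le_two_mul_of_abs_apply_sub_le {x y : Pt} {r : ℝ} (h₀ : |x 0 - y 0| ≤ r)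
    (h₁ : |x 1 - y 1| ≤ r) : dist x y ≤ 2 * r := by
  have hr : 0 ≤ r := (abs_nonneg _).trans h₀
  rw [EuclideanSpace.dist_eq, Fin.sum_univ_two, Real.sqrt_le_left (by positivity),
    Real.dist_eq, Real.dist_eq]
  nlinarith [abs_nonneg (x 0 - y 0), abs_nonneg (x 1 - y 1)]

theorem cast_div_mul_bounds (m n : ℕ) (hn : 0 < n) {s : ℝ} (hs : 0 ≤ s) :
    ((m / n : ℕ) : ℝ) * (n * s) ≤ m * s ∧
      (m : ℝ) * s + s ≤ ((m / n : ℕ) : ℝ) * (n * s) + n * s := by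
  have hle : ((m / n * n : ℕ) : ℝ) ≤ m := by exact_mod_cast Nat.div_mul_le_self m n
  have hlt : ((m + 1 : ℕ) : ℝ) ≤ ((m / n * n + n : ℕ) : ℝ) := by
    exact_mod_cast Nat.lt_div_mul_add hn
  push_cast at hle hlt
  constructor <;> nlinarith

namespace DSquare

theorem side_pos (Q : DSquare) : 0 < Q.side := by
  unfold side
  positivity

noncomputable def center (Q : DSquare) : Pt := pt (Q.x0 + Q.side / 2) (Q.y0 + Q.side / 2)

@[simp] theorem center_apply_zero (Q : DSquare) : Q.center 0 = Q.x0 + Q.side / 2 := rfl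

@[simp] theorem center_apply_one (Q : DSquare) : Q.center 1 = Q.y0 + Q.side / 2 := rfl

theorem center_mem (Q : DSquare) : Q.center ∈ Q.set := by
  have := Q.side_pos
  refine ⟨⟨?_, ?_⟩, ?_, ?_⟩ <;> simp <;> linarith

theorem corner_mem (Q : DSquare) : pt Q.x0 Q.y0 ∈ Q.set := by
  have := Q.side_pos
  refine ⟨⟨?_, ?_⟩, ?_, ?_⟩ <;> simp [this]

theorem dist_center_le {Q : DSquare} {x : Pt} (hx : x ∈ Q.set) : dist x Q.center ≤ Q.side := by
  obtain ⟨⟨h₀, h₀'⟩, h₁, h₁'⟩ := hx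
  have := dist_le_two_mul_of_abs_apply_sub_le (x := x) (y := Q.center) (r := Q.side / 2)
    (by rw [center_apply_zero, abs_le]; constructor <;> linarith)
    (by rw [center_apply_one, abs_le]; constructor <;> linarith)
  linarith

theorem side_le_of_set_subset_closedBall {Q : DSquare} {c : Pt} {r : ℝ}
    (h : Q.set ⊆ closedBall c r) : Q.side ≤ 4 * r := by
  have hcenter := mem_closedBall.1 (h Q.center_mem)
  have hcorner := mem_closedBall.1 (h Q.corner_mem)
  have hhalf := abs_apply_sub_le_dist Q.center (pt Q.x0 Q.y0) 0
  rw [center_apply_zero, pt_apply_zero, add_sub_cancel_left,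
    abs_of_pos (half_pos Q.side_pos)] at hhalf
  linarith [dist_triangle_right Q.center (pt Q.x0 Q.y0) c]

theorem anc_side (Q : DSquare) (k' : ℕ) (h : k' ≤ Q.k) :
    (Q.anc k' h).side = 2 ^ (Q.k - k') * Q.side := by
  simp only [side, anc]
  rw [← Nat.sub_add_cancel h, pow_add, Nat.add_sub_cancel]
  field_simp

theorem anc_x_bounds (Q : DSquare) (k' : ℕ) (h : k' ≤ Q.k) :
    (Q.anc k' h).x0 ≤ Q.x0 ∧ Q.x0 + Q.side ≤ (Q.anc k' h).x0 + (Q.anc k' h).side := by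
  have := cast_div_mul_bounds Q.i (2 ^ (Q.k - k')) (by positivity) Q.side_pos.le
  simp only [x0, anc_side]
  simp only [anc]
  push_cast at this ⊢
  constructor <;> linarith

theorem anc_y_bounds (Q : DSquare) (k' : ℕ) (h : k' ≤ Q.k) :
    (Q.anc k' h).y0 ≤ Q.y0 ∧ Q.y0 + Q.side ≤ (Q.anc k' h).y0 + (Q.anc k' h).side := by
  have := cast_div_mul_bounds Q.j (2 ^ (Q.k - k')) (by positivity) Q.side_pos.le
  simp only [y0, anc_side]
  simp only [anc]
  push_cast at this ⊢
  constructor <;> linarith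

end DSquare

theorem Touch.symm {Q Q' : DSquare} (h : Touch Q Q') : Touch Q' Q :=
  h.mono (inter_comm _ _).subset

theorem Touch.dist_center_le {Q Q' : DSquare} (h : Touch Q Q') :
    dist Q.center Q'.center ≤ 1.1 * (Q.side + Q'.side) := by
  obtain ⟨x, ⟨h₀, h₁⟩, h₀', h₁'⟩ := h
  rw [abs_le] at h₀ h₁ h₀' h₁'
  refine (dist_le_two_mul_of_abs_apply_sub_le (r := 0.55 * (Q.side + Q'.side)) ?_ ?_).trans_eq
    (by ring)
  all_goals
    simp only [DSquare.center_apply_zero, DSquare.center_apply_one, abs_le]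
    constructor <;> linarith

namespace InWhitney

variable {E : Set Pt} {Q Q' : DSquare}

theorem side_le_of_touch (hQ : InWhitney E Q) (hQ' : InWhitney E Q') (ht : Touch Q Q') :
    Q'.side ≤ 4 * Q.side := by
  -- Otherwise the ancestor `A` of `Q` with side `Q'.side / 4` has `3A ⊆ 3Q'`, so `A` would not
  -- have been bisected.
  by_contra! hlt
  have hk : Q'.k + 2 < Q.k := by
    have hpow : (2 : ℝ) ^ (Q'.k + 2) < 2 ^ Q.k := by
      simp only [DSquare.side] at hlt
      rw [mul_div_assoc', div_lt_div_iff₀ (by positivity) (by positivity)] at hlt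
      rw [pow_add]
      linarith
    exact (pow_lt_pow_iff_right₀ one_lt_two).1 hpow
  set A := Q.anc (Q'.k + 2) hk.le
  have hA : A.side = Q'.side / 4 := by
    simp only [A, DSquare.anc, DSquare.side, pow_add]
    ring
  have hsub : A.dil 3 ⊆ Q'.dil 3 := by
    obtain ⟨x, ⟨a₀, a₁⟩, b₀, b₁⟩ := ht
    obtain ⟨hx, hx'⟩ := Q.anc_x_bounds _ hk.le
    obtain ⟨hy, hy'⟩ := Q.anc_y_bounds _ hk.le
    rintro z ⟨z₀, z₁⟩
    rw [abs_le] at a₀ a₁ b₀ b₁ z₀ z₁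
    constructor <;> rw [abs_le] <;> constructor <;> linarith [Q.side_pos]
  exact hQ.2 _ hk (hQ'.1.anti (inter_subset_inter_left E hsub))

theorem set_subset_closedBall_of_touch (hQ : InWhitney E Q) (hQ' : InWhitney E Q')
    (ht : Touch Q Q') {c : Pt} {r : ℝ} (h : Q.set ⊆ closedBall c r) :
    Q'.set ⊆ closedBall c (39 * r) := by
  intro x hx
  have hs := DSquare.side_le_of_set_subset_closedBall h
  have hs' := hQ.side_le_of_touch hQ' ht
  rw [mem_closedBall]
  calc dist x c ≤ dist x Q'.center + dist Q'.center Q.center + dist Q.center c :=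
        dist_triangle4 _ _ _ _
    _ ≤ Q'.side + 1.1 * (Q'.side + Q.side) + r := by
        gcongr
        · exact DSquare.dist_center_le hx
        · exact ht.symm.dist_center_le
        · exact mem_closedBall.1 (h Q.center_mem)
    _ ≤ 39 * r := by linarith

end InWhitney

theorem cluster_subset_of_isPrefix {N : ℕ} {V : Finset (List ℕ)} {W : List ℕ → ℝ}
    {u v : List ℕ} (h : v <+: u) : Cluster N V W u ⊆ Cluster N V W v :=
  fun _ ⟨t, ht, hut, hx⟩ => ⟨t, ht, h.trans hut, hx⟩

theorem dist_le_of_isPrefix {N : ℕ} {V : Finset (List ℕ)} {W : List ℕ → ℝ} {y : List ℕ → Pt}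
    {K : ℝ} (hV : IsNaryTree N V) (hy : ∀ v ∈ V, y v ∈ Cluster N V W v)
    (hK : ∀ v ∈ V, Cluster N V W v ⊆ closedBall (y v) (K * W v)) {u v : List ℕ} (hu : u ∈ V)
    (h : v <+: u) : dist (y u) (y v) ≤ K * W v :=
  mem_closedBall.1 (hK v (hV.2.1 u hu v h) (cluster_subset_of_isPrefix h (hy u hu)))

/-- `cq Q` is the vertex `v` with `C_Q = C_v`: the deepest vertex whose ball `B(y v, R * W v)`,
with `R = κ K₁`, contains `Q`. -/
def IsDeepestClusterMap (E : Set Pt) (V : Finset (List ℕ)) (W : List ℕ → ℝ) (y : List ℕ → Pt)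
    (R : ℝ) (cq : DSquare → List ℕ) : Prop :=
  ∀ Q : DSquare, InWhitney E Q →
    cq Q ∈ V ∧ Q.set ⊆ closedBall (y (cq Q)) (R * W (cq Q)) ∧
      ∀ v ∈ V, Q.set ⊆ closedBall (y v) (R * W v) → v.length ≤ (cq Q).length

namespace IsDeepestClusterMap

variable {N : ℕ} {V : Finset (List ℕ)} {W : List ℕ → ℝ} {ε K R : ℝ} {E : Set Pt}
  {y : List ℕ → Pt} {cq : DSquare → List ℕ} {Q Q' : DSquare}

theorem length_le_succ_of_touch (hcq : IsDeepestClusterMap E V W y R cq) (hV : IsNaryTree N V)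
    (hW : RadiallyDecaying V W ε) (hy : ∀ u ∈ V, ∀ v, v <+: u → dist (y u) (y v) ≤ K * W v)
    (hR₀ : 0 ≤ R) (hR : 39 * R * ε + K ≤ R) (hQ : InWhitney E Q) (hQ' : InWhitney E Q')
    (ht : Touch Q Q') : (cq Q).length ≤ (cq Q').length + 1 := by
  obtain ⟨hv, hQv, -⟩ := hcq Q hQ
  rcases eq_or_ne (cq Q) [] with hnil | hne
  · simp [hnil]
  set v := cq Q
  have hp : v.dropLast ∈ V := hV.2.1 v hv _ v.dropLast_prefix
  have hball : Q'.set ⊆ closedBall (y v.dropLast) (R * W v.dropLast) := by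
    refine (hQ.set_subset_closedBall_of_touch hQ' ht hQv).trans (closedBall_subset_closedBall' ?_)
    have hWv : R * W v ≤ R * (ε * W v.dropLast) := mul_le_mul_of_nonneg_left (hW.2.2 v hv hne) hR₀
    nlinarith [hy v hv _ v.dropLast_prefix, hW.2.1 _ hp]
  have := (hcq Q' hQ').2.2 _ hp hball
  rw [List.length_dropLast] at this
  omega

theorem dist_le_of_touch (hcq : IsDeepestClusterMap E V W y R cq) (hQ : InWhitney E Q)
    (hQ' : InWhitney E Q') (ht : Touch Q Q') :
    dist (y (cq Q)) (y (cq Q')) ≤ 39 * (R * W (cq Q)) + R * W (cq Q') := by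
  have h₁ := mem_closedBall'.1
    (hQ.set_subset_closedBall_of_touch hQ' ht (hcq Q hQ).2.1 Q'.center_mem)
  have h₂ := mem_closedBall.1 ((hcq Q' hQ').2.1 Q'.center_mem)
  linarith [dist_triangle (y (cq Q)) Q'.center (y (cq Q'))]

theorem isPrefix_or_isPrefix_of_touch (hcq : IsDeepestClusterMap E V W y R cq)
    (hV : IsNaryTree N V) (hW : RadiallyDecaying V W ε) (hε : ε ≤ 1 / 2)
    (hyC : ∀ v ∈ V, y v ∈ Cluster N V W v)
    (hy : ∀ u ∈ V, ∀ v, v <+: u → dist (y u) (y v) ≤ K * W v) (hK : 0 ≤ K) (hR₀ : 0 ≤ R)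
    (hsmall : ((N : ℝ) - 1) * ((4 + 2 * K + 40 * R) * ε) < 1) (hQ : InWhitney E Q)
    (hQ' : InWhitney E Q') (ht : Touch Q Q') : cq Q <+: cq Q' ∨ cq Q' <+: cq Q := by
  by_contra! hfork
  obtain ⟨w, a, b, hab, ha, hb⟩ := List.exists_fork_of_not_isPrefix hfork.1 hfork.2
  have hvv' := hcq.dist_le_of_touch hQ hQ' ht
  obtain ⟨hv, -, -⟩ := hcq Q hQ
  obtain ⟨hv', -, -⟩ := hcq Q' hQ'
  set v := cq Q
  set v' := cq Q'
  have hwa : w ++ [a] ∈ V := hV.2.1 _ hv _ ha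
  have hwb : w ++ [b] ∈ V := hV.2.1 _ hv' _ hb
  have hw : w ∈ V := hV.2.1 _ hwa _ (List.prefix_append _ _)
  have hε₁ : ε ≤ 1 := by linarith
  have hWa := hW.le_mul_of_isPrefix hV hε₁ hwa (List.prefix_append _ _) (by simp)
  have hWb := hW.le_mul_of_isPrefix hV hε₁ hwb (List.prefix_append _ _) (by simp)
  have hWv := hW.le_of_isPrefix hV hε₁ hv ha
  have hWv' := hW.le_of_isPrefix hV hε₁ hv' hb
  have hab_close : dist (y (w ++ [a])) (y (w ++ [b])) ≤
      K * W (w ++ [a]) + 39 * (R * W v) + R * W v' + K * W (w ++ [b]) := by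
    have := dist_triangle4 (y (w ++ [a])) (y v) (y v') (y (w ++ [b]))
    linarith [hy v hv _ ha, hy v' hv' _ hb, dist_comm (y v) (y (w ++ [a]))]
  obtain ⟨ua, hua, hwua, hya⟩ := hyC _ hwa
  obtain ⟨ub, hub, hwub, hyb⟩ := hyC _ hwb
  have hsep := le_mul_abs_Psi_sub_add_of_fork hW hV hε hab hua.1 hub.1 hwua hwub
  have hΨ : |Psi N W ua - Psi N W ub| ≤ dist (y (w ++ [a])) (y (w ++ [b])) := by
    simpa [hya, hyb] using abs_apply_sub_le_dist (y (w ++ [a])) (y (w ++ [b])) 0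
  have hN : (0 : ℝ) ≤ (N : ℝ) - 1 := by
    rw [sub_nonneg, Nat.one_le_cast]
    exact (Nat.zero_le a).trans_lt (hV.2.2.1 _ hwa a (by simp))
  have hWw := hW.2.1 w hw
  have hcontra : W w ≤ ((N : ℝ) - 1) * ((4 + 2 * K + 40 * R) * ε) * W w := by
    refine hsep.trans ?_
    rw [mul_assoc]
    gcongr
    nlinarith [hW.2.1 v hv, hW.2.1 v' hv']
  linarith [mul_lt_of_lt_one_left hWw hsmall]

end IsDeepestClusterMap

/-- part (C) of Lemma 8 of the paper. -/
theorem statement16 :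
    ∃ κ₁ K₁ : ℝ, 10 < κ₁ ∧ 1 < K₁ ∧
      ∀ κ : ℝ, κ₁ ≤ κ →
        ∃ k₀ : ℝ, 0 < k₀ ∧
          ∀ (N : ℕ) (V : Finset (List ℕ)) (W : List ℕ → ℝ) (ε : ℝ)
              (y : List ℕ → Pt) (cq : DSquare → List ℕ),
            TreeHyp k₀ N V W ε → DepthAtLeastOne V →
            (∀ v ∈ V, y v ∈ Cluster N V W v) →
            (∀ v ∈ V, Cluster N V W v ⊆ closedBall (y v) (K₁ * W v)) →
            Q0set ⊆ closedBall (y []) (κ * K₁ * W []) →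
            (∀ Q : DSquare, InWhitney (Eset N V W) Q →
              cq Q ∈ V ∧
                Q.set ⊆ closedBall (y (cq Q)) (κ * K₁ * W (cq Q)) ∧
                ∀ v ∈ V, Q.set ⊆ closedBall (y v) (κ * K₁ * W v) →
                  v.length ≤ (cq Q).length) →
            ∀ Q Q' : DSquare, InWhitney (Eset N V W) Q → InWhitney (Eset N V W) Q' →
              Touch Q Q' → cq Q ≠ cq Q' →
                cq Q = (cq Q').dropLast ∨ cq Q' = (cq Q).dropLast := by
  refine ⟨11, 2, by norm_num, by norm_num, fun κ hκ => ⟨1 / (100 * κ), by positivity, ?_⟩⟩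
  intro N V W ε y cq ⟨hN, hV, hε, hεk, hW⟩ _ hyC hball _ hcq Q Q' hQ hQ' ht hne
  have hcq : IsDeepestClusterMap (Eset N V W) V W y (κ * 2) cq := hcq
  have hy : ∀ u ∈ V, ∀ v, v <+: u → dist (y u) (y v) ≤ 2 * W v :=
    fun _ hu _ h => dist_le_of_isPrefix hV hyC hball hu h
  have hN₂ : (2 : ℝ) ≤ N := by exact_mod_cast hN
  have hεN : ε * N * κ ≤ 1 / 100 := by
    rw [le_div_iff₀ (by positivity)] at hεk
    calc ε * N * κ ≤ 1 / (100 * κ) * κ := by gcongr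
      _ = 1 / 100 := by field_simp
  have hεκ : ε * κ ≤ 1 / 200 := by nlinarith [mul_pos hε (by linarith : (0 : ℝ) < κ)]
  have hεN' : ε * N ≤ 1 / 1100 := by nlinarith [mul_pos hε (by linarith : (0 : ℝ) < N)]
  have hR : 39 * (κ * 2) * ε + 2 ≤ κ * 2 := by linarith
  have hsmall : ((N : ℝ) - 1) * ((4 + 2 * 2 + 40 * (κ * 2)) * ε) < 1 := by nlinarith
  have hdepth {P P' : DSquare} (hP : InWhitney (Eset N V W) P) (hP' : InWhitney (Eset N V W) P')
      (ht : Touch P P') : (cq P).length ≤ (cq P').length + 1 :=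
    hcq.length_le_succ_of_touch hV hW hy (by positivity) hR hP hP' ht
  rcases hcq.isPrefix_or_isPrefix_of_touch hV hW (by nlinarith) hyC hy zero_le_two
    (by positivity) hsmall hQ hQ' ht with h | h
  · exact Or.inl (h.eq_dropLast_of_length_le_succ hne (hdepth hQ' hQ ht.symm))
  · exact Or.inr (h.eq_dropLast_of_length_le_succ hne.symm (hdepth hQ hQ' ht))
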